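/- arXiv:0811.4003 — 2 statements merged into one kernel-verified Lean document; each statement's English description precedes it below -/
import Mathlib

section
/- Let b ∈ ℝ³ be a unit vector and let ρ = (1/4)(I_2 ⊗ I_2 + σ_z ⊗ (b·σ)). Then for the unitary U = σ_x (which commutes with the reduced state Tr_B(ρ) = I_2/2), one has (1/√2)·‖ρ − (σ_x ⊗ I_2) ρ (σ_x ⊗ I_2)‖_F = 1/√2. Hence ρ is a zero-discord separable two-qubit state whose maximal LNU distance attains the value 1/√2, the maximum possible for two-qubit separable states; in particular, nonzero LNU distance does not imply nonzero quantum discord. -/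
/-! Conjugation by `σ_x ⊗ I` fixes `I ⊗ I` and flips the sign of `σ_z ⊗ (b·σ)`, since
`σ_x σ_z σ_x = -σ_z`; hence `ρ - (σ_x ⊗ I) ρ (σ_x ⊗ I) = ½ σ_z ⊗ (b·σ)`. The Frobenius norm is
multiplicative on Kronecker products, and `‖σ_z‖_F = ‖b·σ‖_F = √2` because `(b·σ)² = |b|² I`,
so the difference has Frobenius norm `1`. The reduced state is `I/2` because `b·σ` is traceless. -/

open Matrix Kronecker

/-- Pauli matrix σ_x. -/
def pauliX : Matrix (Fin 2) (Fin 2) ℂ := !![0, 1; 1, 0]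

/-- Pauli matrix σ_y. -/
def pauliY : Matrix (Fin 2) (Fin 2) ℂ := !![0, -Complex.I; Complex.I, 0]

/-- Pauli matrix σ_z. -/
def pauliZ : Matrix (Fin 2) (Fin 2) ℂ := !![1, 0; 0, -1]

/-- v·σ = v₁σ_x + v₂σ_y + v₃σ_z for a real 3-vector v. -/
noncomputable def pauliDot (v : Fin 3 → ℝ) : Matrix (Fin 2) (Fin 2) ℂ :=
  (v 0 : ℂ) • pauliX + (v 1 : ℂ) • pauliY + (v 2 : ℂ) • pauliZ

/-- The Frobenius norm of a complex matrix: `‖A‖_F = √(Tr(AᴴA))`. -/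
noncomputable def frobNorm {n : Type*} [Fintype n] (A : Matrix n n ℂ) : ℝ :=
  Real.sqrt ((Aᴴ * A).trace.re)

/-- Partial trace over the second tensor factor. -/
noncomputable def ptraceB {M N : ℕ} (ρ : Matrix (Fin M × Fin N) (Fin M × Fin N) ℂ) :
    Matrix (Fin M) (Fin M) ℂ :=
  Matrix.of fun i j => ∑ k, ρ (i, k) (j, k)

section PartialTrace

variable {M N : ℕ}

theorem ptraceB_add (ρ σ : Matrix (Fin M × Fin N) (Fin M × Fin N) ℂ) :
    ptraceB (ρ + σ) = ptraceB ρ + ptraceB σ := by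
  ext i j
  simp [ptraceB, Finset.sum_add_distrib]

theorem ptraceB_smul (c : ℂ) (ρ : Matrix (Fin M × Fin N) (Fin M × Fin N) ℂ) :
    ptraceB (c • ρ) = c • ptraceB ρ := by
  ext i j
  simp [ptraceB, Finset.mul_sum]

theorem ptraceB_kronecker (A : Matrix (Fin M) (Fin M) ℂ) (B : Matrix (Fin N) (Fin N) ℂ) :
    ptraceB (A ⊗ₖ B) = B.trace • A := by
  ext i j
  simp [ptraceB, Matrix.trace, Finset.mul_sum, mul_comm]

theorem ptraceB_one : ptraceB (1 : Matrix (Fin M × Fin N) (Fin M × Fin N) ℂ) = (N : ℂ) • 1 := by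
  rw [← one_kronecker_one, ptraceB_kronecker, trace_one, Fintype.card_fin]

end PartialTrace

section FrobeniusNorm

variable {m n : Type*} [Fintype m] [Fintype n]

open scoped ComplexOrder in
theorem trace_conjTranspose_mul_self_nonneg (A : Matrix m m ℂ) : 0 ≤ (Aᴴ * A).trace :=
  (posSemidef_conjTranspose_mul_self A).trace_nonneg

theorem trace_conjTranspose_mul_self_eq_ofReal_re (A : Matrix m m ℂ) :
    (Aᴴ * A).trace = ((Aᴴ * A).trace.re : ℂ) :=
  Complex.eq_re_of_ofReal_le (r := 0) (by exact_mod_cast trace_conjTranspose_mul_self_nonneg A)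

theorem frobNorm_smul (c : ℂ) (A : Matrix m m ℂ) : frobNorm (c • A) = ‖c‖ * frobNorm A := by
  have : (c • A)ᴴ * (c • A) = ((‖c‖ ^ 2 : ℝ) : ℂ) • (Aᴴ * A) := by
    rw [conjTranspose_smul, smul_mul_smul_comm, ← Complex.normSq_eq_norm_sq,
      Complex.normSq_eq_conj_mul_self]
    rfl
  rw [frobNorm, frobNorm, this, trace_smul, smul_eq_mul, Complex.re_ofReal_mul,
    Real.sqrt_mul (sq_nonneg _), Real.sqrt_sq (norm_nonneg _)]

theorem frobNorm_kronecker (A : Matrix m m ℂ) (B : Matrix n n ℂ) :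
    frobNorm (A ⊗ₖ B) = frobNorm A * frobNorm B := by
  have htrace : ((A ⊗ₖ B)ᴴ * (A ⊗ₖ B)).trace = (Aᴴ * A).trace * (Bᴴ * B).trace := by
    rw [conjTranspose_kronecker, ← mul_kronecker_mul, trace_kronecker]
  rw [frobNorm, htrace, trace_conjTranspose_mul_self_eq_ofReal_re A,
    trace_conjTranspose_mul_self_eq_ofReal_re B, ← Complex.ofReal_mul, Complex.ofReal_re,
    Real.sqrt_mul (Complex.nonneg_iff.mp (trace_conjTranspose_mul_self_nonneg A)).1]
  rfl

end FrobeniusNorm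

section Pauli

theorem pauliX_mul_self : pauliX * pauliX = 1 := by
  ext i j; fin_cases i <;> fin_cases j <;> simp [pauliX]

theorem pauliX_mul_pauliZ_mul_pauliX : pauliX * pauliZ * pauliX = -pauliZ := by
  ext i j; fin_cases i <;> fin_cases j <;> simp [pauliX, pauliZ]

theorem trace_pauliDot (v : Fin 3 → ℝ) : (pauliDot v).trace = 0 := by
  simp [pauliDot, pauliX, pauliY, pauliZ, Matrix.trace, Fin.sum_univ_succ]

theorem conjTranspose_pauliDot (v : Fin 3 → ℝ) : (pauliDot v)ᴴ = pauliDot v := by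
  ext i j; fin_cases i <;> fin_cases j <;> simp [pauliDot, pauliX, pauliY, pauliZ]

theorem pauliDot_mul_self (v : Fin 3 → ℝ) :
    pauliDot v * pauliDot v = ((∑ i, v i ^ 2 : ℝ) : ℂ) • 1 := by
  ext i j; fin_cases i <;> fin_cases j <;>
    simp [pauliDot, pauliX, pauliY, pauliZ, Fin.sum_univ_succ] <;> ring_nf <;> simp

theorem frobNorm_pauliZ : frobNorm pauliZ = √2 := by
  simp [frobNorm, pauliZ, Matrix.trace, mul_apply, Fin.sum_univ_two]; norm_num

theorem frobNorm_pauliDot (v : Fin 3 → ℝ) : frobNorm (pauliDot v) = √(2 * ∑ i, v i ^ 2) := by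
  rw [frobNorm, conjTranspose_pauliDot, pauliDot_mul_self, trace_smul, trace_one]
  norm_num [mul_comm, ← Complex.ofReal_pow]

end Pauli

theorem conj_one_add_kronecker {R m n : Type*} [CommRing R] [Fintype m] [Fintype n]
    [DecidableEq m] [DecidableEq n] (U A : Matrix m m R) (B : Matrix n n R) (hU : U * U = 1) :
    (U ⊗ₖ 1) * (1 + A ⊗ₖ B) * (U ⊗ₖ 1) = 1 + (U * A * U) ⊗ₖ B := by
  rw [mul_add, add_mul, mul_one, ← mul_kronecker_mul, ← mul_kronecker_mul, ← mul_kronecker_mul]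
  simp only [hU, mul_one, one_mul, one_kronecker_one]

/-- The zero-discord separable two-qubit state ρ = ¼(I⊗I + σ_z⊗(b·σ)) has maximally
mixed reduced state I/2 (so σ_x is a locally noneffective unitary for it), and its
LNU distance under σ_x equals 1/√2 — the maximum possible for two-qubit separable
states. Hence nonzero LNU distance does not imply nonzero quantum discord. -/
theorem zero_discord_state_attains_max_separable_lnu (b : Fin 3 → ℝ)
    (hb : ∑ i, b i ^ 2 = 1)
    (ρ : Matrix (Fin 2 × Fin 2) (Fin 2 × Fin 2) ℂ)
    (hρ : ρ = (4 : ℂ)⁻¹ • ((1 : Matrix (Fin 2 × Fin 2) (Fin 2 × Fin 2) ℂ) +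
      pauliZ ⊗ₖ pauliDot b)) :
    ptraceB ρ = (2 : ℂ)⁻¹ • (1 : Matrix (Fin 2) (Fin 2) ℂ) ∧
      (1 / Real.sqrt 2) * frobNorm (ρ - (pauliX ⊗ₖ (1 : Matrix (Fin 2) (Fin 2) ℂ)) * ρ *
        (pauliX ⊗ₖ (1 : Matrix (Fin 2) (Fin 2) ℂ))) = 1 / Real.sqrt 2 := by
  subst hρ
  constructor
  · rw [ptraceB_smul, ptraceB_add, ptraceB_one, ptraceB_kronecker, trace_pauliDot, zero_smul,
      add_zero, smul_smul]
    norm_num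
  · have hconj : (pauliX ⊗ₖ 1) * (1 + pauliZ ⊗ₖ pauliDot b) * (pauliX ⊗ₖ 1) =
        1 - pauliZ ⊗ₖ pauliDot b := by
      rw [conj_one_add_kronecker _ _ _ pauliX_mul_self, pauliX_mul_pauliZ_mul_pauliX,
        ← neg_one_smul ℂ pauliZ, smul_kronecker]
      module
    have hdiff : (4 : ℂ)⁻¹ • (1 + pauliZ ⊗ₖ pauliDot b) -
        (pauliX ⊗ₖ 1) * ((4 : ℂ)⁻¹ • (1 + pauliZ ⊗ₖ pauliDot b)) * (pauliX ⊗ₖ 1) =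
        (2 : ℂ)⁻¹ • pauliZ ⊗ₖ pauliDot b := by
      rw [Matrix.mul_smul, Matrix.smul_mul, hconj]
      module
    rw [hdiff, frobNorm_smul, frobNorm_kronecker, frobNorm_pauliZ, frobNorm_pauliDot, hb,
      mul_one, Real.mul_self_sqrt zero_le_two]
    norm_num
end

section
/- Let d, m ≥ 1, let {b_k^t} (k = 1,…,d, t = 1,…,m) be unit vectors in ℂ^d, and let ρ = (1/(m d)) · Σ_{k,t} |k⟩⟨k| ⊗ |t⟩⟨t| ⊗ |b_k^t⟩⟨b_k^t| be the locking state on ℂ^d ⊗ ℂ^m ⊗ ℂ^d, a space of total dimension m d². Then for every m d² × m d² unitary matrix V, (1/√2)·‖ρ − V ρ V†‖_F ≤ √(2·(1/(m d) − 1/(m d²))); in particular, for m = 2 and d = 2^n this bound equals √(2^n − 1)/2^n ≈ 2^{−n/2}, so the LNU distance of the locking state vanishes exponentially in n. -/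
open Matrix Kronecker

/-- The classical-correlation-locking state:
ρ = (1/(md)) Σ_{k,t} |k⟩⟨k| ⊗ |t⟩⟨t| ⊗ |b_k^t⟩⟨b_k^t| on ℂ^d ⊗ ℂ^m ⊗ ℂ^d. -/
noncomputable def lockingState (d m : ℕ) (b : Fin d → Fin m → Fin d → ℂ) :
    Matrix (Fin d × Fin m × Fin d) (Fin d × Fin m × Fin d) ℂ :=
  ((m * d : ℕ) : ℂ)⁻¹ • ∑ k : Fin d, ∑ t : Fin m,
    Matrix.single k k (1 : ℂ) ⊗ₖ
      (Matrix.single t t (1 : ℂ) ⊗ₖ Matrix.vecMulVec (b k t) (star (b k t)))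

/-! Since the maximally mixed state `1 / D` commutes with every unitary, `ρ - VρVᴴ = X - VXVᴴ`
for `X = ρ - 1 / D`, so the triangle inequality and the unitary invariance of the Frobenius norm
give `‖ρ - VρVᴴ‖_F ≤ 2‖X‖_F = 2√(Tr(ρᴴρ) - 1 / D)` whenever `Tr ρ = 1`. The locking state is
`1 / (md)` times a sum of `md` mutually orthogonal rank-one projections, hence `ρ² = ρ / (md)` and
`Tr ρ² = 1 / (md)`. -/

section Frobenius

variable {n : Type*} [Fintype n]

attribute [local instance] Matrix.frobeniusSeminormedAddCommGroup

theorem re_trace_conjTranspose_mul_self (A : Matrix n n ℂ) :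
    (Aᴴ * A).trace.re = ∑ i, ∑ j, ‖A i j‖ ^ 2 := by
  simp only [trace, diag, mul_apply, conjTranspose_apply, Complex.star_def, Complex.conj_mul',
    Complex.re_sum]
  rw [Finset.sum_comm]
  norm_cast

theorem frobNorm_eq_norm (A : Matrix n n ℂ) : frobNorm A = ‖A‖ := by
  rw [frobNorm, frobenius_norm_def, re_trace_conjTranspose_mul_self, Real.sqrt_eq_rpow]
  norm_cast

theorem frobNorm_sub_le (A B : Matrix n n ℂ) : frobNorm (A - B) ≤ frobNorm A + frobNorm B := by
  simpa only [frobNorm_eq_norm] using norm_sub_le A B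

theorem frobNorm_unitary_conj [DecidableEq n] {V : Matrix n n ℂ} (hV : V ∈ unitaryGroup n ℂ)
    (A : Matrix n n ℂ) : frobNorm (V * A * Vᴴ) = frobNorm A := by
  have hVV : Vᴴ * V = 1 := Unitary.star_mul_self_of_mem hV
  have hgram : (V * A * Vᴴ)ᴴ * (V * A * Vᴴ) = V * (Aᴴ * A) * Vᴴ := by
    simp only [conjTranspose_mul, conjTranspose_conjTranspose, Matrix.mul_assoc]
    rw [← Matrix.mul_assoc Vᴴ, hVV, Matrix.one_mul]
  rw [frobNorm, frobNorm, hgram, trace_mul_cycle, ← Matrix.mul_assoc, hVV, Matrix.one_mul]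

theorem nonempty_of_trace_eq_one {ρ : Matrix n n ℂ} (hρ : ρ.trace = 1) : Nonempty n := by
  by_contra h
  rw [not_nonempty_iff] at h
  simp [trace] at hρ

theorem trace_conjTranspose_mul_self_sub_smul_one [DecidableEq n] {ρ : Matrix n n ℂ}
    (hρ : ρ.trace = 1) :
    ((ρ - (Fintype.card n : ℂ)⁻¹ • 1)ᴴ * (ρ - (Fintype.card n : ℂ)⁻¹ • 1)).trace =
      (ρᴴ * ρ).trace - (Fintype.card n : ℂ)⁻¹ := by
  have := nonempty_of_trace_eq_one hρ
  have hN : (Fintype.card n : ℂ) ≠ 0 := by simp [Fintype.card_ne_zero]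
  simp only [conjTranspose_sub, conjTranspose_smul, conjTranspose_one, star_inv₀, star_natCast,
    Matrix.sub_mul, Matrix.mul_sub, Matrix.smul_mul, Matrix.mul_smul, Matrix.one_mul,
    Matrix.mul_one, trace_sub, trace_smul, trace_one, trace_conjTranspose, hρ, star_one,
    smul_eq_mul]
  field_simp
  ring

theorem frobNorm_sub_unitary_conj_le [DecidableEq n] {ρ V : Matrix n n ℂ} (hρ : ρ.trace = 1)
    (hV : V ∈ unitaryGroup n ℂ) :
    frobNorm (ρ - V * ρ * Vᴴ) ≤ 2 * √((ρᴴ * ρ).trace.re - (Fintype.card n : ℝ)⁻¹) := by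
  set X := ρ - (Fintype.card n : ℂ)⁻¹ • 1 with hX
  have hVV : V * Vᴴ = 1 := Unitary.mul_star_self_of_mem hV
  have hconj : V * X * Vᴴ = V * ρ * Vᴴ - (Fintype.card n : ℂ)⁻¹ • 1 := by
    rw [hX, Matrix.mul_sub, Matrix.sub_mul, Matrix.mul_smul, Matrix.mul_one, Matrix.smul_mul, hVV]
  have hX_norm : frobNorm X = √((ρᴴ * ρ).trace.re - (Fintype.card n : ℝ)⁻¹) := by
    rw [frobNorm, trace_conjTranspose_mul_self_sub_smul_one hρ]
    simp
  calc frobNorm (ρ - V * ρ * Vᴴ) = frobNorm (X - V * X * Vᴴ) := by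
        rw [hconj, hX, sub_sub_sub_cancel_right]
    _ ≤ frobNorm X + frobNorm (V * X * Vᴴ) := frobNorm_sub_le _ _
    _ = 2 * √((ρᴴ * ρ).trace.re - (Fintype.card n : ℝ)⁻¹) := by
      rw [frobNorm_unitary_conj hV, hX_norm, two_mul]

end Frobenius

section LockingState

variable {d m : ℕ} (b : Fin d → Fin m → Fin d → ℂ)

noncomputable def lockingProj (p : Fin d × Fin m) :
    Matrix (Fin d × Fin m × Fin d) (Fin d × Fin m × Fin d) ℂ :=
  single p.1 p.1 1 ⊗ₖ (single p.2 p.2 1 ⊗ₖ vecMulVec (b p.1 p.2) (star (b p.1 p.2)))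

theorem lockingState_eq_smul_sum :
    lockingState d m b = ((m * d : ℕ) : ℂ)⁻¹ • ∑ p, lockingProj b p := by
  rw [lockingState, Fintype.sum_prod_type]
  rfl

theorem isHermitian_lockingProj (p : Fin d × Fin m) : (lockingProj b p).IsHermitian := by
  simp [IsHermitian, lockingProj, conjTranspose_kronecker]

variable {b}

theorem trace_lockingProj (hb : ∀ k t, ∑ i, star (b k t i) * b k t i = 1)
    (p : Fin d × Fin m) : (lockingProj b p).trace = 1 := by
  have hunit : star (b p.1 p.2) ⬝ᵥ b p.1 p.2 = 1 := hb p.1 p.2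
  rw [lockingProj, trace_kronecker, trace_kronecker, trace_vecMulVec, dotProduct_comm, hunit]
  simp

theorem orthogonalIdempotents_lockingProj (hb : ∀ k t, ∑ i, star (b k t i) * b k t i = 1) :
    OrthogonalIdempotents (lockingProj b) := by
  rw [OrthogonalIdempotents.iff_mul_eq]
  rintro ⟨k, t⟩ ⟨k', t'⟩
  simp only [lockingProj, ← mul_kronecker_mul]
  by_cases hk : k = k'
  · subst hk
    by_cases ht : t = t'
    · subst ht
      have hunit : star (b k t) ⬝ᵥ b k t = 1 := hb k t
      simp [vecMulVec_mul_vecMulVec, hunit]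
    · simp [ht, single_mul_single_of_ne]
  · simp [hk, single_mul_single_of_ne]

theorem isHermitian_lockingState : (lockingState d m b).IsHermitian := by
  rw [lockingState_eq_smul_sum]
  exact IsHermitian.smul (isSelfAdjoint_sum _ fun p _ => isHermitian_lockingProj b p)
    (IsSelfAdjoint.natCast _).inv₀

theorem lockingState_mul_self (hb : ∀ k t, ∑ i, star (b k t i) * b k t i = 1) :
    lockingState d m b * lockingState d m b = ((m * d : ℕ) : ℂ)⁻¹ • lockingState d m b := by
  rw [lockingState_eq_smul_sum, smul_mul_smul, smul_smul,
    (orthogonalIdempotents_lockingProj hb).isIdempotentElem_sum.eq]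

theorem trace_lockingState (hd : d ≠ 0) (hm : m ≠ 0)
    (hb : ∀ k t, ∑ i, star (b k t i) * b k t i = 1) : (lockingState d m b).trace = 1 := by
  rw [lockingState_eq_smul_sum, trace_smul, trace_sum]
  simp only [trace_lockingProj hb, Finset.sum_const, Finset.card_univ, Fintype.card_prod,
    Fintype.card_fin, nsmul_eq_mul, mul_one, smul_eq_mul]
  rw [mul_comm d m]
  exact inv_mul_cancel₀ (Nat.cast_ne_zero.mpr (mul_ne_zero hm hd))

theorem trace_conjTranspose_mul_self_lockingState (hd : d ≠ 0) (hm : m ≠ 0)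
    (hb : ∀ k t, ∑ i, star (b k t i) * b k t i = 1) :
    ((lockingState d m b)ᴴ * lockingState d m b).trace = ((m * d : ℕ) : ℂ)⁻¹ := by
  rw [(isHermitian_lockingState (b := b)).eq, lockingState_mul_self hb, trace_smul,
    trace_lockingState hd hm hb, smul_eq_mul, mul_one]

end LockingState

/-- For every unitary V on ℂ^d ⊗ ℂ^m ⊗ ℂ^d, the LNU distance of the locking state
under V is at most √(2(1/(md) − 1/(md²))); for m = 2 and d = 2ⁿ this equals
√(2ⁿ−1)/2ⁿ ≈ 2^{−n/2}, so it vanishes exponentially in n. -/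
theorem lockingState_lnu_distance_bound (d m : ℕ) (hd : 1 ≤ d) (hm : 1 ≤ m)
    (b : Fin d → Fin m → Fin d → ℂ)
    (hb : ∀ k t, ∑ i, star (b k t i) * b k t i = 1)
    (V : Matrix (Fin d × Fin m × Fin d) (Fin d × Fin m × Fin d) ℂ)
    (hV : V ∈ Matrix.unitaryGroup (Fin d × Fin m × Fin d) ℂ) :
    (1 / Real.sqrt 2) * frobNorm (lockingState d m b - V * lockingState d m b * Vᴴ)
      ≤ Real.sqrt (2 * (1 / (m * d) - 1 / (m * d ^ 2))) := by
  have hd0 : d ≠ 0 := Nat.one_le_iff_ne_zero.mp hd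
  have hm0 : m ≠ 0 := Nat.one_le_iff_ne_zero.mp hm
  have hpurity : ((lockingState d m b)ᴴ * lockingState d m b).trace.re = 1 / (m * d) := by
    rw [trace_conjTranspose_mul_self_lockingState hd0 hm0 hb]
    simp
  have hcard : (Fintype.card (Fin d × Fin m × Fin d) : ℝ) = m * d ^ 2 := by
    simp only [Fintype.card_prod, Fintype.card_fin]
    push_cast
    ring
  have hbound := frobNorm_sub_unitary_conj_le (trace_lockingState hd0 hm0 hb) hV
  rw [hpurity, hcard, ← one_div] at hbound
  calc (1 / √2) * frobNorm (lockingState d m b - V * lockingState d m b * Vᴴ)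
      ≤ 1 / √2 * (2 * √(1 / (m * d) - 1 / (m * d ^ 2))) := by gcongr
    _ = √(2 * (1 / (m * d) - 1 / (m * d ^ 2))) := by
      rw [Real.sqrt_mul zero_le_two, one_div_mul_eq_div, mul_div_right_comm, Real.div_sqrt]
end
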